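/- Under the same hypotheses with κ₁, κ₂ of class C², for x ∈ C[0,1] the function Kx is twice differentiable and (Kx)''(s) = (∂κ₁/∂s(s,s) − ∂κ₂/∂s(s,s)) x(s) + ∫₀ˢ (∂²κ₁/∂s²)(s,t) x(t) dt + ∫ₛ¹ (∂²κ₂/∂s²)(s,t) x(t) dt. -/

import Mathlib

open intervalIntegral

/-! Continue each branch `κᵢ` of the kernel from its triangle to the whole square by its
first-order Taylor polynomial in `s` at the diagonal. The continuation is `C¹` in `s`, so the
Leibniz rule with a variable limit, `d/ds ∫_c^s F(s,t) dt = F(s,s) + ∫_c^s ∂ₛF(s,t) dt`, applies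
to both `∫₀ˢ` and `∫ₛ¹`. The boundary terms `±κᵢ(s,s) x(s)` cancel in `(Kx)'` because `κ₁ = κ₂`
on the diagonal; in `(Kx)''` they leave the jump `(∂ₛκ₁ - ∂ₛκ₂)(s,s) x(s)`. -/

open Set Filter Topology MeasureTheory Asymptotics Metric Interval

section Square

variable {E : Type*} [NormedAddCommGroup E] {F G : ℝ → ℝ → E} {a b c d s u : ℝ}

theorem ContinuousOn.intervalIntegrable_of_square (hF : ContinuousOn ↿F (Icc a b ×ˢ Icc a b))
    (hu : u ∈ Icc a b) (hc : c ∈ Icc a b) (hd : d ∈ Icc a b) :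
    IntervalIntegrable (F u) volume c d :=
  ((hF.uncurry_left u hu).mono (uIcc_subset_Icc hc hd)).intervalIntegrable

variable [NormedSpace ℝ E]

theorem hasDerivWithinAt_intervalIntegral_param (hF : ContinuousOn ↿F (Icc a b ×ˢ Icc a b))
    (hG : ContinuousOn ↿G (Icc a b ×ˢ Icc a b))
    (hFG : ∀ u ∈ Icc a b, ∀ t ∈ Icc a b, HasDerivWithinAt (F · t) (G u t) (Icc a b) u)
    (hc : c ∈ Icc a b) (hd : d ∈ Icc a b) (hs : s ∈ Icc a b) :
    HasDerivWithinAt (fun u => ∫ t in c..d, F u t) (∫ t in c..d, G s t) (Icc a b) s := by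
  rw [hasDerivWithinAt_iff_isLittleO, isLittleO_iff]
  intro ε hε
  set η := ε / (|d - c| + 1)
  have hη : 0 < η := by positivity
  have hunif : TendstoUniformlyOn G (G s) (𝓝[Icc a b] s) (Icc a b) :=
    ((isCompact_Icc.prod isCompact_Icc).uniformContinuousOn_of_continuous hG).tendstoUniformlyOn hs
  obtain ⟨δ, hδ, hGclose⟩ :=
    mem_nhdsWithin_iff.1 (Metric.tendstoUniformlyOn_iff.1 hunif η hη)
  have hconv : Convex ℝ (ball s δ ∩ Icc a b) := (convex_ball s δ).inter (convex_Icc a b)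
  filter_upwards [mem_nhdsWithin_iff.2 ⟨δ, hδ, subset_rfl⟩] with u hu
  -- Mean value inequality for `r ↦ F r t - (r - s) • G s t`, whose derivative is `≤ η` near `s`.
  have hpoint : ∀ t ∈ Icc a b, ‖F u t - F s t - (u - s) • G s t‖ ≤ η * |u - s| := by
    intro t ht
    have hderiv : ∀ r ∈ ball s δ ∩ Icc a b, HasDerivWithinAt (fun r => F r t - (r - s) • G s t)
        (G r t - G s t) (ball s δ ∩ Icc a b) r := fun r hr =>
      (((hFG r hr.2 t ht).mono inter_subset_right).sub
        (((hasDerivWithinAt_id r _).sub_const s).smul_const (G s t))).congr_deriv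
        (by rw [one_smul])
    have := hconv.norm_image_sub_le_of_norm_hasDerivWithin_le hderiv
      (fun r hr => by rw [← dist_eq_norm, dist_comm]; exact (hGclose hr t ht).le)
      ⟨mem_ball_self hδ, hs⟩ hu
    rwa [sub_self, zero_smul, sub_zero, sub_right_comm, Real.norm_eq_abs] at this
  calc ‖(∫ t in c..d, F u t) - (∫ t in c..d, F s t) - (u - s) • ∫ t in c..d, G s t‖
      = ‖∫ t in c..d, (F u t - F s t - (u - s) • G s t)‖ := by
        have hFu := hF.intervalIntegrable_of_square hu.2 hc hd
        have hFs := hF.intervalIntegrable_of_square hs hc hd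
        have hGs : IntervalIntegrable (fun t => (u - s) • G s t) volume c d :=
          (hG.intervalIntegrable_of_square hs hc hd).smul (u - s)
        rw [intervalIntegral.integral_sub (hFu.sub hFs) hGs,
          intervalIntegral.integral_sub hFu hFs, intervalIntegral.integral_smul]
    _ ≤ η * |u - s| * |d - c| := norm_integral_le_of_norm_le_const fun t ht =>
        hpoint t (uIcc_subset_Icc hc hd (uIoc_subset_uIcc ht))
    _ ≤ ε * ‖u - s‖ := by
        have : η * |d - c| ≤ ε := by
          rw [div_mul_eq_mul_div, div_le_iff₀ (by positivity)]
          nlinarith [abs_nonneg (d - c)]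
        rw [Real.norm_eq_abs]
        nlinarith [abs_nonneg (u - s)]

variable [CompleteSpace E]

theorem hasDerivWithinAt_intervalIntegral_diag (hF : ContinuousOn ↿F (Icc a b ×ˢ Icc a b))
    (hs : s ∈ Icc a b) :
    HasDerivWithinAt (fun u => ∫ t in s..u, F u t) (F s s) (Icc a b) s := by
  rw [hasDerivWithinAt_iff_isLittleO, isLittleO_iff]
  intro ε hε
  obtain ⟨δ, hδ, hclose⟩ := Metric.continuousWithinAt_iff.1 (hF (s, s) ⟨hs, hs⟩) ε hε
  filter_upwards [mem_nhdsWithin_iff.2 ⟨δ, hδ, subset_rfl⟩] with u ⟨hus, hu⟩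
  have hbound : ∀ t ∈ Ι s u, ‖F u t - F s s‖ ≤ ε := fun t ht => by
    have htI : t ∈ Icc a b := uIcc_subset_Icc hs hu (uIoc_subset_uIcc ht)
    have hts : dist t s ≤ dist u s := by
      rw [dist_comm t, dist_comm u]
      exact Real.dist_left_le_of_mem_uIcc (uIoc_subset_uIcc ht)
    rw [← dist_eq_norm]
    refine (hclose (x := (u, t)) ⟨hu, htI⟩ ?_).le
    rw [Prod.dist_eq]
    exact max_lt hus (hts.trans_lt hus)
  calc ‖(∫ t in s..u, F u t) - (∫ t in s..s, F s t) - (u - s) • F s s‖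
      = ‖∫ t in s..u, (F u t - F s s)‖ := by
        rw [integral_same, sub_zero, integral_sub (hF.intervalIntegrable_of_square hu hs hu)
          intervalIntegrable_const, intervalIntegral.integral_const]
    _ ≤ ε * ‖u - s‖ := norm_integral_le_of_norm_le_const hbound

theorem hasDerivWithinAt_intervalIntegral_param_upper
    (hF : ContinuousOn ↿F (Icc a b ×ˢ Icc a b)) (hG : ContinuousOn ↿G (Icc a b ×ˢ Icc a b))
    (hFG : ∀ u ∈ Icc a b, ∀ t ∈ Icc a b, HasDerivWithinAt (F · t) (G u t) (Icc a b) u)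
    (hc : c ∈ Icc a b) (hs : s ∈ Icc a b) :
    HasDerivWithinAt (fun u => ∫ t in c..u, F u t) (F s s + ∫ t in c..s, G s t) (Icc a b) s := by
  have hsplit : ∀ u ∈ Icc a b,
      ∫ t in c..u, F u t = (∫ t in c..s, F u t) + ∫ t in s..u, F u t := fun u hu =>
    (integral_add_adjacent_intervals (hF.intervalIntegrable_of_square hu hc hs)
      (hF.intervalIntegrable_of_square hu hs hu)).symm
  rw [add_comm]
  exact ((hasDerivWithinAt_intervalIntegral_param hF hG hFG hc hs hs).add
    (hasDerivWithinAt_intervalIntegral_diag hF hs)).congr hsplit (hsplit s hs)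

end Square

section Triangle

variable {a b s t u : ℝ}

def lowerTriangle (a b : ℝ) : Set (ℝ × ℝ) := {p | a ≤ p.2 ∧ p.2 ≤ p.1 ∧ p.1 ≤ b}

def upperTriangle (a b : ℝ) : Set (ℝ × ℝ) := {p | a ≤ p.1 ∧ p.1 ≤ p.2 ∧ p.2 ≤ b}

theorem ContinuousOn.comp_max_lowerTriangle {X : Type*} [TopologicalSpace X] {f : ℝ → ℝ → X}
    (hf : ContinuousOn ↿f (lowerTriangle a b)) :
    ContinuousOn (fun p : ℝ × ℝ => f (max p.1 p.2) p.2) (Icc a b ×ˢ Icc a b) :=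
  hf.comp ((continuous_fst.max continuous_snd).prodMk continuous_snd).continuousOn
    fun _ hp => ⟨hp.2.1, le_max_right _ _, max_le hp.1.2 hp.2.2⟩

theorem ContinuousOn.comp_min_upperTriangle {X : Type*} [TopologicalSpace X] {f : ℝ → ℝ → X}
    (hf : ContinuousOn ↿f (upperTriangle a b)) :
    ContinuousOn (fun p : ℝ × ℝ => f (min p.1 p.2) p.2) (Icc a b ×ˢ Icc a b) :=
  hf.comp ((continuous_fst.min continuous_snd).prodMk continuous_snd).continuousOn
    fun _ hp => ⟨le_min hp.1.1 hp.2.1, min_le_right _ _, hp.2.2⟩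

variable {E : Type*} [NormedAddCommGroup E] [NormedSpace ℝ E] {κ dκ : ℝ → ℝ → E}

/-- For `u < t` this is the first-order Taylor polynomial of `κ (·) t` at the diagonal point. -/
def extendLower (κ dκ : ℝ → ℝ → E) (u t : ℝ) : E :=
  κ (max u t) t + (u - max u t) • dκ (max u t) t

def extendUpper (κ dκ : ℝ → ℝ → E) (u t : ℝ) : E :=
  κ (min u t) t + (u - min u t) • dκ (min u t) t

theorem extendLower_of_le (h : t ≤ u) : extendLower κ dκ u t = κ u t := by
  simp [extendLower, max_eq_left h]

theorem extendLower_of_ge (h : u ≤ t) : extendLower κ dκ u t = κ t t + (u - t) • dκ t t := by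
  simp [extendLower, max_eq_right h]

theorem extendUpper_of_le (h : u ≤ t) : extendUpper κ dκ u t = κ u t := by
  simp [extendUpper, min_eq_left h]

theorem extendUpper_of_ge (h : t ≤ u) : extendUpper κ dκ u t = κ t t + (u - t) • dκ t t := by
  simp [extendUpper, min_eq_right h]

theorem continuousOn_extendLower (hκ : ContinuousOn ↿κ (lowerTriangle a b))
    (hdκ : ContinuousOn ↿dκ (lowerTriangle a b)) :
    ContinuousOn ↿(extendLower κ dκ) (Icc a b ×ˢ Icc a b) :=
  hκ.comp_max_lowerTriangle.add
    ((continuousOn_fst.sub (continuous_fst.max continuous_snd).continuousOn).smul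
      hdκ.comp_max_lowerTriangle)

theorem continuousOn_extendUpper (hκ : ContinuousOn ↿κ (upperTriangle a b))
    (hdκ : ContinuousOn ↿dκ (upperTriangle a b)) :
    ContinuousOn ↿(extendUpper κ dκ) (Icc a b ×ˢ Icc a b) :=
  hκ.comp_min_upperTriangle.add
    ((continuousOn_fst.sub (continuous_fst.min continuous_snd).continuousOn).smul
      hdκ.comp_min_upperTriangle)

theorem hasDerivAt_const_add_sub_smul (c w : E) (t v : ℝ) :
    HasDerivAt (fun r => c + (r - t) • w) w v := by
  simpa using (((hasDerivAt_id v).sub_const t).smul_const w).const_add c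

theorem hasDerivWithinAt_extendLower
    (hd : ∀ p ∈ lowerTriangle a b, HasDerivWithinAt (κ · p.2) (dκ p.1 p.2) (Icc p.2 b) p.1)
    (hu : u ∈ Icc a b) (ht : t ∈ Icc a b) :
    HasDerivWithinAt (extendLower κ dκ · t) (dκ (max u t) t) (Icc a b) u := by
  -- Off the diagonal one of the two pieces is vacuous, as `u` lies outside its closure.
  have hlo : HasDerivWithinAt (extendLower κ dκ · t) (dκ (max u t) t) (Icc a t) u := by
    by_cases hut : u ≤ t
    · rw [max_eq_right hut]
      exact (hasDerivAt_const_add_sub_smul _ _ t u).hasDerivWithinAt.congr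
        (fun r hr => extendLower_of_ge hr.2) (extendLower_of_ge hut)
    · exact HasFDerivWithinAt.of_notMem_closure (by simp [closure_Icc, hut])
  have hhi : HasDerivWithinAt (extendLower κ dκ · t) (dκ (max u t) t) (Icc t b) u := by
    by_cases htu : t ≤ u
    · rw [max_eq_left htu]
      exact (hd (u, t) ⟨ht.1, htu, hu.2⟩).congr (fun r hr => extendLower_of_le hr.1)
        (extendLower_of_le htu)
    · exact HasFDerivWithinAt.of_notMem_closure (by simp [closure_Icc, htu])
  exact (hlo.union hhi).mono (Icc_union_Icc_eq_Icc ht.1 ht.2).ge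

theorem hasDerivWithinAt_extendUpper
    (hd : ∀ p ∈ upperTriangle a b, HasDerivWithinAt (κ · p.2) (dκ p.1 p.2) (Icc a p.2) p.1)
    (hu : u ∈ Icc a b) (ht : t ∈ Icc a b) :
    HasDerivWithinAt (extendUpper κ dκ · t) (dκ (min u t) t) (Icc a b) u := by
  have hlo : HasDerivWithinAt (extendUpper κ dκ · t) (dκ (min u t) t) (Icc a t) u := by
    by_cases hut : u ≤ t
    · rw [min_eq_left hut]
      exact (hd (u, t) ⟨hu.1, hut, ht.2⟩).congr (fun r hr => extendUpper_of_le hr.2)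
        (extendUpper_of_le hut)
    · exact HasFDerivWithinAt.of_notMem_closure (by simp [closure_Icc, hut])
  have hhi : HasDerivWithinAt (extendUpper κ dκ · t) (dκ (min u t) t) (Icc t b) u := by
    by_cases htu : t ≤ u
    · rw [min_eq_right htu]
      exact (hasDerivAt_const_add_sub_smul _ _ t u).hasDerivWithinAt.congr
        (fun r hr => extendUpper_of_ge hr.1) (extendUpper_of_ge htu)
    · exact HasFDerivWithinAt.of_notMem_closure (by simp [closure_Icc, htu])
  exact (hlo.union hhi).mono (Icc_union_Icc_eq_Icc ht.1 ht.2).ge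

variable [CompleteSpace E]

theorem hasDerivWithinAt_integral_lowerTriangle (hκ : ContinuousOn ↿κ (lowerTriangle a b))
    (hdκc : ContinuousOn ↿dκ (lowerTriangle a b))
    (hd : ∀ p ∈ lowerTriangle a b, HasDerivWithinAt (κ · p.2) (dκ p.1 p.2) (Icc p.2 b) p.1)
    (hs : s ∈ Icc a b) :
    HasDerivWithinAt (fun u => ∫ t in a..u, κ u t) (κ s s + ∫ t in a..s, dκ s t) (Icc a b) s := by
  have H := hasDerivWithinAt_intervalIntegral_param_upper (continuousOn_extendLower hκ hdκc)
    hdκc.comp_max_lowerTriangle (fun u hu t ht => hasDerivWithinAt_extendLower hd hu ht)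
    (left_mem_Icc.2 (hs.1.trans hs.2)) hs
  have hext : ∀ u ∈ Icc a b, ∫ t in a..u, extendLower κ dκ u t = ∫ t in a..u, κ u t :=
    fun u hu => integral_congr fun t ht => extendLower_of_le (uIcc_of_le hu.1 ▸ ht).2
  refine (H.congr (fun u hu => (hext u hu).symm) (hext s hs).symm).congr_deriv ?_
  have hmax : ∫ t in a..s, dκ (max s t) t = ∫ t in a..s, dκ s t :=
    integral_congr fun t ht => by rw [max_eq_left (uIcc_of_le hs.1 ▸ ht).2]
  rw [extendLower_of_le le_rfl, hmax]

theorem hasDerivWithinAt_integral_upperTriangle (hκ : ContinuousOn ↿κ (upperTriangle a b))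
    (hdκc : ContinuousOn ↿dκ (upperTriangle a b))
    (hd : ∀ p ∈ upperTriangle a b, HasDerivWithinAt (κ · p.2) (dκ p.1 p.2) (Icc a p.2) p.1)
    (hs : s ∈ Icc a b) :
    HasDerivWithinAt (fun u => ∫ t in u..b, κ u t) (-κ s s + ∫ t in s..b, dκ s t) (Icc a b) s := by
  have H := (hasDerivWithinAt_intervalIntegral_param_upper (continuousOn_extendUpper hκ hdκc)
    hdκc.comp_min_upperTriangle (fun u hu t ht => hasDerivWithinAt_extendUpper hd hu ht)
    (right_mem_Icc.2 (hs.1.trans hs.2)) hs).neg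
  have hext : ∀ u ∈ Icc a b, -∫ t in b..u, extendUpper κ dκ u t = ∫ t in u..b, κ u t :=
    fun u hu => by
      rw [← integral_symm]
      exact integral_congr fun t ht => extendUpper_of_le (uIcc_of_le hu.2 ▸ ht).1
  refine (H.congr (fun u hu => (hext u hu).symm) (hext s hs).symm).congr_deriv ?_
  have hmin : ∫ t in s..b, dκ (min s t) t = ∫ t in s..b, dκ s t :=
    integral_congr fun t ht => by rw [min_eq_left (uIcc_of_le hs.2 ▸ ht).1]
  rw [extendUpper_of_le le_rfl, neg_add, ← integral_symm, hmin]

end Triangle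

section Green

variable {κ₁ κ₂ dκ₁ dκ₂ : ℝ → ℝ → ℝ} {x : ℝ → ℝ} {a b s : ℝ}

theorem integral_ite_le_eq_add {E : Type*} [NormedAddCommGroup E] [NormedSpace ℝ E]
    {f g : ℝ → E} {u : ℝ} (hf : IntervalIntegrable f volume a u)
    (hg : IntervalIntegrable g volume u b) (hau : a ≤ u) (hub : u ≤ b) :
    ∫ t in a..b, (if t ≤ u then f t else g t) = (∫ t in a..u, f t) + ∫ t in u..b, g t := by
  have hlo : EqOn f (fun t => if t ≤ u then f t else g t) (uIoo a u) := fun t ht => by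
    rw [uIoo_of_le hau] at ht
    simp [ht.2.le]
  have hhi : EqOn g (fun t => if t ≤ u then f t else g t) (uIoo u b) := fun t ht => by
    rw [uIoo_of_le hub] at ht
    simp [not_le.2 ht.1]
  rw [integral_congr_uIoo hlo, integral_congr_uIoo hhi,
    integral_add_adjacent_intervals (hf.congr_uIoo hlo) (hg.congr_uIoo hhi)]

theorem hasDerivWithinAt_integral_green (hx : ContinuousOn x (Icc a b))
    (hκ₁ : ContinuousOn ↿κ₁ (lowerTriangle a b)) (hdκ₁c : ContinuousOn ↿dκ₁ (lowerTriangle a b))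
    (hdκ₁ : ∀ p ∈ lowerTriangle a b, HasDerivWithinAt (κ₁ · p.2) (dκ₁ p.1 p.2) (Icc p.2 b) p.1)
    (hκ₂ : ContinuousOn ↿κ₂ (upperTriangle a b)) (hdκ₂c : ContinuousOn ↿dκ₂ (upperTriangle a b))
    (hdκ₂ : ∀ p ∈ upperTriangle a b, HasDerivWithinAt (κ₂ · p.2) (dκ₂ p.1 p.2) (Icc a p.2) p.1)
    (hs : s ∈ Icc a b) :
    HasDerivWithinAt (fun u => (∫ t in a..u, κ₁ u t * x t) + ∫ t in u..b, κ₂ u t * x t)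
      ((κ₁ s s - κ₂ s s) * x s + (∫ t in a..s, dκ₁ s t * x t) + ∫ t in s..b, dκ₂ s t * x t)
      (Icc a b) s := by
  have hx₁ : ContinuousOn (fun p : ℝ × ℝ => x p.2) (lowerTriangle a b) :=
    hx.comp continuousOn_snd fun _ hp => ⟨hp.1, hp.2.1.trans hp.2.2⟩
  have hx₂ : ContinuousOn (fun p : ℝ × ℝ => x p.2) (upperTriangle a b) :=
    hx.comp continuousOn_snd fun _ hp => ⟨hp.1.trans hp.2.1, hp.2.2⟩
  have H₁ := hasDerivWithinAt_integral_lowerTriangle (κ := fun u t => κ₁ u t * x t)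
    (dκ := fun u t => dκ₁ u t * x t)
    (hκ₁.mul hx₁) (hdκ₁c.mul hx₁) (fun p hp => (hdκ₁ p hp).mul_const (x p.2)) hs
  have H₂ := hasDerivWithinAt_integral_upperTriangle (κ := fun u t => κ₂ u t * x t)
    (dκ := fun u t => dκ₂ u t * x t)
    (hκ₂.mul hx₂) (hdκ₂c.mul hx₂) (fun p hp => (hdκ₂ p hp).mul_const (x p.2)) hs
  exact (H₁.add H₂).congr_deriv (by ring)

theorem hasDerivWithinAt_integral_greenKernel (hx : ContinuousOn x (Icc a b))
    (hκ₁ : ContinuousOn ↿κ₁ (lowerTriangle a b)) (hdκ₁c : ContinuousOn ↿dκ₁ (lowerTriangle a b))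
    (hdκ₁ : ∀ p ∈ lowerTriangle a b, HasDerivWithinAt (κ₁ · p.2) (dκ₁ p.1 p.2) (Icc p.2 b) p.1)
    (hκ₂ : ContinuousOn ↿κ₂ (upperTriangle a b)) (hdκ₂c : ContinuousOn ↿dκ₂ (upperTriangle a b))
    (hdκ₂ : ∀ p ∈ upperTriangle a b, HasDerivWithinAt (κ₂ · p.2) (dκ₂ p.1 p.2) (Icc a p.2) p.1)
    (hdiag : ∀ u ∈ Icc a b, κ₁ u u = κ₂ u u) (hs : s ∈ Icc a b) :
    HasDerivWithinAt (fun u => ∫ t in a..b, (if t ≤ u then κ₁ u t else κ₂ u t) * x t)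
      ((∫ t in a..s, dκ₁ s t * x t) + ∫ t in s..b, dκ₂ s t * x t) (Icc a b) s := by
  have hsplit : ∀ u ∈ Icc a b, ∫ t in a..b, (if t ≤ u then κ₁ u t else κ₂ u t) * x t =
      (∫ t in a..u, κ₁ u t * x t) + ∫ t in u..b, κ₂ u t * x t := fun u hu => by
    simp only [ite_mul]
    refine integral_ite_le_eq_add ?_ ?_ hu.1 hu.2 <;> refine ContinuousOn.intervalIntegrable ?_
    · rw [uIcc_of_le hu.1]
      exact (hκ₁.comp (Continuous.prodMk_right u).continuousOn
        fun t ht => ⟨ht.1, ht.2, hu.2⟩).mul (hx.mono (Icc_subset_Icc_right hu.2))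
    · rw [uIcc_of_le hu.2]
      exact (hκ₂.comp (Continuous.prodMk_right u).continuousOn
        fun t ht => ⟨hu.1, ht.1, ht.2⟩).mul (hx.mono (Icc_subset_Icc_left hu.1))
  have H := hasDerivWithinAt_integral_green hx hκ₁ hdκ₁c hdκ₁ hκ₂ hdκ₂c hdκ₂ hs
  rw [hdiag s hs, sub_self, zero_mul, zero_add] at H
  exact H.congr hsplit (hsplit s hs)

end Green

/-- With `κ₁, κ₂` of class `C²` on the closed triangles `Ω₁, Ω₂`
(formalized via given first and second `s`-partial derivatives `dκᵢ, d2κᵢ` within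
the triangles, all continuous there), agreeing on the diagonal, and `x ∈ C[0,1]`,
the function `Kx(s) = ∫₀¹ κ(s,t)x(t)dt` is twice differentiable on `[0,1]` and
`(Kx)''(s) = (∂κ₁/∂s(s,s) − ∂κ₂/∂s(s,s)) x(s) + ∫₀ˢ ∂²κ₁/∂s²(s,t)x(t)dt
 + ∫ₛ¹ ∂²κ₂/∂s²(s,t)x(t)dt`. -/
theorem green_kernel_second_derivative
    (κ₁ κ₂ dκ₁ dκ₂ d2κ₁ d2κ₂ : ℝ → ℝ → ℝ) (x : ℝ → ℝ)
    (hx : ContinuousOn x (Set.Icc 0 1))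
    (hκ₁ : ContinuousOn (fun p : ℝ × ℝ => κ₁ p.1 p.2)
      {p : ℝ × ℝ | 0 ≤ p.2 ∧ p.2 ≤ p.1 ∧ p.1 ≤ 1})
    (hκ₂ : ContinuousOn (fun p : ℝ × ℝ => κ₂ p.1 p.2)
      {p : ℝ × ℝ | 0 ≤ p.1 ∧ p.1 ≤ p.2 ∧ p.2 ≤ 1})
    (hdκ₁ : ∀ p : ℝ × ℝ, 0 ≤ p.2 → p.2 ≤ p.1 → p.1 ≤ 1 →
      HasDerivWithinAt (fun u => κ₁ u p.2) (dκ₁ p.1 p.2) (Set.Icc p.2 1) p.1)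
    (hdκ₂ : ∀ p : ℝ × ℝ, 0 ≤ p.1 → p.1 ≤ p.2 → p.2 ≤ 1 →
      HasDerivWithinAt (fun u => κ₂ u p.2) (dκ₂ p.1 p.2) (Set.Icc 0 p.2) p.1)
    (hd2κ₁ : ∀ p : ℝ × ℝ, 0 ≤ p.2 → p.2 ≤ p.1 → p.1 ≤ 1 →
      HasDerivWithinAt (fun u => dκ₁ u p.2) (d2κ₁ p.1 p.2) (Set.Icc p.2 1) p.1)
    (hd2κ₂ : ∀ p : ℝ × ℝ, 0 ≤ p.1 → p.1 ≤ p.2 → p.2 ≤ 1 →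
      HasDerivWithinAt (fun u => dκ₂ u p.2) (d2κ₂ p.1 p.2) (Set.Icc 0 p.2) p.1)
    (hdκ₁c : ContinuousOn (fun p : ℝ × ℝ => dκ₁ p.1 p.2)
      {p : ℝ × ℝ | 0 ≤ p.2 ∧ p.2 ≤ p.1 ∧ p.1 ≤ 1})
    (hdκ₂c : ContinuousOn (fun p : ℝ × ℝ => dκ₂ p.1 p.2)
      {p : ℝ × ℝ | 0 ≤ p.1 ∧ p.1 ≤ p.2 ∧ p.2 ≤ 1})
    (hd2κ₁c : ContinuousOn (fun p : ℝ × ℝ => d2κ₁ p.1 p.2)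
      {p : ℝ × ℝ | 0 ≤ p.2 ∧ p.2 ≤ p.1 ∧ p.1 ≤ 1})
    (hd2κ₂c : ContinuousOn (fun p : ℝ × ℝ => d2κ₂ p.1 p.2)
      {p : ℝ × ℝ | 0 ≤ p.1 ∧ p.1 ≤ p.2 ∧ p.2 ≤ 1})
    (hdiag : ∀ u ∈ Set.Icc (0:ℝ) 1, κ₁ u u = κ₂ u u) :
    ∀ s ∈ Set.Icc (0:ℝ) 1,
      HasDerivWithinAt
        (fun u => ∫ t in (0:ℝ)..1, (if t ≤ u then κ₁ u t else κ₂ u t) * x t)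
        ((∫ t in (0:ℝ)..s, dκ₁ s t * x t) + ∫ t in s..(1:ℝ), dκ₂ s t * x t)
        (Set.Icc 0 1) s
      ∧
      HasDerivWithinAt
        (fun u => (∫ t in (0:ℝ)..u, dκ₁ u t * x t) + ∫ t in u..(1:ℝ), dκ₂ u t * x t)
        ((dκ₁ s s - dκ₂ s s) * x s
          + (∫ t in (0:ℝ)..s, d2κ₁ s t * x t) + ∫ t in s..(1:ℝ), d2κ₂ s t * x t)
        (Set.Icc 0 1) s := by
  intro s hs
  exact ⟨hasDerivWithinAt_integral_greenKernel hx hκ₁ hdκ₁c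
      (fun p hp => hdκ₁ p hp.1 hp.2.1 hp.2.2) hκ₂ hdκ₂c (fun p hp => hdκ₂ p hp.1 hp.2.1 hp.2.2)
      hdiag hs,
    hasDerivWithinAt_integral_green hx hdκ₁c hd2κ₁c (fun p hp => hd2κ₁ p hp.1 hp.2.1 hp.2.2)
      hdκ₂c hd2κ₂c (fun p hp => hd2κ₂ p hp.1 hp.2.1 hp.2.2) hs⟩
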